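/- Let N, l be positive integers with l < N, let L(ξ) = ∑_{j=0}^{l} C(N-1+j,j) sin^{2j}(ξ/2), q₁ = sup_{|ξ|≤π} |L(ξ)| = ∑_{j=0}^{l} C(N-1+j,j), and q₂ = |L(2π/3)|. Fix an integer J ≥ 2. Then for all real ξ with |ξ| > 1, ∏_{j=1}^{∞} |L(2^{-j}ξ)| ≤ exp(C₂/3) · q₁ q₂^{J-1} · |ξ|^{log₂(q₁^{1/(J-1)} q₂)}, where C₂ = (∑_{j=1}^{l} C(N-1+j,j))/4. -/

import Mathlib

open Real Finset

noncomputable def distPartL (N l : ℕ) (ξ : ℝ) : ℝ :=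
  ∑ j ∈ Finset.range (l + 1), ((N - 1 + j).choose j : ℝ) * Real.sin (ξ / 2) ^ (2 * j)

/-!
Write `L(ξ) = P(sin²(ξ/2))` with `P(t) = ∑ C(N-1+j, j) tʲ`, increasing on `[0, 1]`, so that
`q₁ = P(1)` and `q₂ = P(3/4)`. With `y = sin²(x/2)` one has `sin² x = 4y(1-y)`, and
`P(y) P(4y(1-y))` is decreasing on `[3/4, 1]` because `t P'(t) ≤ l P(t)` while
`P'(z) ≥ (2l/3) P(z)` for `z ≤ 3/4`. Hence `L(x) ≤ q₂` or `L(2x) L(x) ≤ q₂²`: pairing each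
factor exceeding `q₂` with the one before it bounds `∏_{j ≤ m} L(ξ/2^(j+1))` by `q₁ q₂^m`.
Since `L(x) ≤ exp(C₂ x²)`, the factors with `j > m` contribute at most `exp(C₂/3)` once
`2^m ≤ |ξ| < 2^(m+1)`, and `q₂^m ≤ (q₁^(1/(J-1)) q₂)^m ≤ |ξ|^(log₂(q₁^(1/(J-1)) q₂))`.
-/

theorem Real.sin_sq_eq_four_mul_sin_sq_half (x : ℝ) :
    sin x ^ 2 = 4 * sin (x / 2) ^ 2 * (1 - sin (x / 2) ^ 2) := by
  conv_lhs => rw [← mul_div_cancel₀ x two_ne_zero, sin_two_mul]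
  rw [← cos_sq']
  ring

theorem Real.pow_le_rpow_logb {b X y : ℝ} {k : ℕ} (hb : 1 < b) (hX : 1 ≤ X) (hy : b ^ k ≤ y) :
    X ^ k ≤ y ^ logb b X := by
  calc X ^ k = (b ^ logb b X) ^ k := by rw [rpow_logb (by linarith) hb.ne' (by linarith)]
    _ = (b ^ k) ^ logb b X := rpow_pow_comm (by linarith) _ _
    _ ≤ y ^ logb b X := rpow_le_rpow (by positivity) hy (logb_nonneg hb hX)

theorem hasSum_sq_div_two_pow (x : ℝ) (n : ℕ) :
    HasSum (fun j : ℕ ↦ (x / 2 ^ (j + n + 1)) ^ 2) ((x / 2 ^ n) ^ 2 / 3) := by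
  have hterm : (fun j : ℕ ↦ (x / 2 ^ (j + n + 1)) ^ 2) =
      fun j ↦ (x / 2 ^ n) ^ 2 / 4 * (1 / 4) ^ j := by
    funext j
    rw [one_div_pow, show (4 : ℝ) ^ j = (2 ^ j) ^ 2 by rw [← pow_mul, mul_comm, pow_mul]; norm_num,
      pow_succ, pow_add]
    field_simp
    ring
  rw [hterm, show (x / 2 ^ n) ^ 2 / 3 = (x / 2 ^ n) ^ 2 / 4 * (1 - 1 / 4)⁻¹ by ring]
  exact (hasSum_geometric_of_lt_one (by norm_num) (by norm_num)).mul_left _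

theorem Finset.prod_range_succ_le_mul_pow {R : Type*} [CommSemiring R] [PartialOrder R]
    [IsOrderedRing R] {a : ℕ → R} {M q : R} (ha : ∀ j, 0 ≤ a j) (hq : 0 ≤ q) (h₀ : a 0 ≤ M)
    (hqM : q ≤ M) (hstep : ∀ j, a (j + 1) ≤ q ∨ a j * a (j + 1) ≤ q ^ 2) (n : ℕ) :
    ∏ j ∈ range (n + 1), a j ≤ M * q ^ n := by
  induction n using Nat.strong_induction_on with
  | _ n ih =>
  rcases n with _ | k
  · simpa using h₀
  have hM : 0 ≤ M := (ha 0).trans h₀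
  rcases hstep k with hlast | hpair
  · rw [prod_range_succ, pow_succ, ← mul_assoc]
    exact mul_le_mul (ih k k.lt_succ_self) hlast (ha _) (mul_nonneg hM (pow_nonneg hq _))
  · rw [prod_range_succ, prod_range_succ, mul_assoc]
    rcases k with _ | m
    · simpa using hpair.trans (by rw [sq]; exact mul_le_mul_of_nonneg_right hqM hq)
    · calc (∏ j ∈ range (m + 1), a j) * (a (m + 1) * a (m + 1 + 1)) ≤ M * q ^ m * q ^ 2 :=
            mul_le_mul (ih m (by omega)) hpair (mul_nonneg (ha _) (ha _))
              (mul_nonneg hM (pow_nonneg hq _))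
        _ = M * q ^ (m + 1 + 1) := by ring

theorem Real.tprod_le_prod_range_mul_exp {b f : ℕ → ℝ} (hb : ∀ j, 1 ≤ b j)
    (hbf : ∀ j, b j ≤ exp (f j)) (hf : Summable f) (n : ℕ) :
    ∏' j, b j ≤ (∏ j ∈ range n, b j) * exp (∑' j, f (j + n)) := by
  have hpos (j : ℕ) : 0 < b j := one_pos.trans_le (hb j)
  have hlog_le (j : ℕ) : log (b j) ≤ f j := (log_le_iff_le_exp (hpos j)).2 (hbf j)
  have hlog : Summable fun j ↦ log (b j) :=
    hf.of_nonneg_of_le (fun j ↦ log_nonneg (hb j)) hlog_le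
  have hprod : ∏' j, b j = exp (∑' j, log (b j)) := by
    simpa [Function.comp_def, exp_log (hpos _)] using hlog.hasSum.rexp.tprod_eq
  rw [hprod, ← hlog.sum_add_tsum_nat_add n, exp_add, exp_sum]
  simp only [exp_log (hpos _)]
  exact mul_le_mul_of_nonneg_left (exp_le_exp.2 (((summable_nat_add_iff n).2 hlog).tsum_le_tsum
    (fun j ↦ hlog_le _) ((summable_nat_add_iff n).2 hf))) (prod_nonneg fun j _ ↦ (hpos j).le)

theorem cast_choose_pred_add_succ_mul {N : ℕ} (hN : 0 < N) (j : ℕ) :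
    ((N - 1 + (j + 1)).choose (j + 1) : ℝ) * (j + 1) = (N + j) * (N - 1 + j).choose j := by
  have h := Nat.add_one_mul_choose_eq (N - 1 + j) j
  rw [show N - 1 + j + 1 = N + j by omega] at h
  rw [show N - 1 + (j + 1) = N + j by omega]
  exact_mod_cast h.symm

noncomputable def distPartPoly (N l : ℕ) (t : ℝ) : ℝ :=
  ∑ j ∈ range (l + 1), ((N - 1 + j).choose j : ℝ) * t ^ j

noncomputable def distPartPolyDeriv (N l : ℕ) (t : ℝ) : ℝ :=
  ∑ j ∈ range (l + 1), ((N - 1 + j).choose j : ℝ) * (j * t ^ (j - 1))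

section distPartPoly

variable {N l : ℕ}

theorem one_le_distPartPoly {t : ℝ} (ht : 0 ≤ t) : 1 ≤ distPartPoly N l t := by
  rw [distPartPoly, sum_range_succ']
  simp only [add_zero, Nat.choose_zero_right, Nat.cast_one, pow_zero, mul_one,
    le_add_iff_nonneg_left]
  positivity

theorem distPartPoly_mono {s t : ℝ} (hs : 0 ≤ s) (hst : s ≤ t) :
    distPartPoly N l s ≤ distPartPoly N l t := by
  unfold distPartPoly
  gcongr

theorem distPartPoly_one :
    distPartPoly N l 1 = ∑ j ∈ range (l + 1), ((N - 1 + j).choose j : ℝ) := by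
  simp [distPartPoly]

theorem distPartPoly_le_one_add_mul {u : ℝ} (hu₀ : 0 ≤ u) (hu₁ : u ≤ 1) :
    distPartPoly N l u ≤ 1 + (∑ j ∈ Icc 1 l, ((N - 1 + j).choose j : ℝ)) * u := by
  rw [distPartPoly, sum_range_succ', sum_mul, ← Finset.Ico_add_one_right_eq_Icc,
    sum_Ico_eq_sum_range]
  simp only [add_tsub_cancel_right, Nat.choose_zero_right, Nat.cast_one, pow_zero, mul_one,
    add_zero, add_comm 1]
  rw [add_comm]
  gcongr
  exact pow_le_of_le_one hu₀ hu₁ (Nat.succ_ne_zero _)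

theorem hasDerivAt_distPartPoly (t : ℝ) :
    HasDerivAt (distPartPoly N l) (distPartPolyDeriv N l t) t := by
  unfold distPartPoly
  exact HasDerivAt.fun_sum fun j _ ↦ (hasDerivAt_pow j t).const_mul _

theorem mul_distPartPolyDeriv_le {t : ℝ} (ht : 0 ≤ t) :
    t * distPartPolyDeriv N l t ≤ l * distPartPoly N l t := by
  rw [distPartPolyDeriv, distPartPoly, mul_sum, mul_sum]
  refine sum_le_sum fun j hj ↦ ?_
  have hjl : (j : ℝ) ≤ l := by exact_mod_cast Nat.lt_succ_iff.mp (mem_range.mp hj)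
  rcases j with _ | j
  · simp only [CharP.cast_eq_zero, zero_mul, mul_zero]
    positivity
  · rw [Nat.add_sub_cancel]
    set a : ℝ := ((N - 1 + (j + 1)).choose (j + 1) : ℝ)
    calc t * (a * (↑(j + 1) * t ^ j)) = (j + 1 : ℕ) * (a * t ^ (j + 1)) := by ring
      _ ≤ l * (a * t ^ (j + 1)) := by gcongr

theorem distPartPolyDeriv_eq_sum (hN : 0 < N) (t : ℝ) :
    distPartPolyDeriv N l t = ∑ j ∈ range l, (N + j) * ((N - 1 + j).choose j : ℝ) * t ^ j := by
  rw [distPartPolyDeriv, sum_range_succ']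
  simp only [CharP.cast_eq_zero, zero_mul, mul_zero, add_zero]
  refine sum_congr rfl fun j _ ↦ ?_
  rw [← cast_choose_pred_add_succ_mul hN, Nat.add_sub_cancel]
  push_cast
  ring

theorem mul_distPartPoly_le_distPartPolyDeriv (hlN : l < N) {z : ℝ} (hz₀ : 0 ≤ z)
    (hz : z ≤ 3 / 4) : 2 * l / 3 * distPartPoly N l z ≤ distPartPolyDeriv N l z := by
  rw [distPartPolyDeriv_eq_sum (by omega)]
  rcases l with _ | k
  · simp
  have hN : (k : ℝ) + 2 ≤ N := by exact_mod_cast hlN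
  rw [distPartPoly, sum_range_succ, sum_range_succ, sum_range_succ, mul_add, mul_add]
  set A := ((N - 1 + k).choose k : ℝ) * z ^ k
  set B := ((N - 1 + (k + 1)).choose (k + 1) : ℝ) * z ^ (k + 1)
  have hA : 0 ≤ A := by positivity
  have hAB : B * (k + 1) = (N + k) * A * z := by
    rw [mul_right_comm, cast_choose_pred_add_succ_mul (by omega)]
    ring
  have hlow : 2 * (k + 1 : ℕ) / 3 * ∑ j ∈ range k, ((N - 1 + j).choose j : ℝ) * z ^ j ≤
      ∑ j ∈ range k, (N + j) * ((N - 1 + j).choose j : ℝ) * z ^ j := by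
    rw [mul_sum]
    refine sum_le_sum fun j _ ↦ ?_
    rw [← mul_assoc]
    gcongr
    push_cast
    linarith [(Nat.cast_nonneg j : (0 : ℝ) ≤ j)]
  -- only the last term `(N + k) A` of `P'` is needed to absorb the top term `B` of `P`
  have htop : 2 * (k + 1 : ℕ) / 3 * A + 2 * (k + 1 : ℕ) / 3 * B ≤ (N + k) * A := by
    push_cast
    nlinarith [mul_le_mul_of_nonneg_left hz (by positivity : 0 ≤ (N + k) * A)]
  linarith

theorem distPartPoly_mul_logistic_deriv_nonpos (hlN : l < N) {x : ℝ} (hx : 3 / 4 ≤ x)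
    (hx₁ : x ≤ 1) :
    distPartPolyDeriv N l x * distPartPoly N l (4 * x * (1 - x)) +
      distPartPoly N l x * (distPartPolyDeriv N l (4 * x * (1 - x)) * (4 - 8 * x)) ≤ 0 := by
  set z := 4 * x * (1 - x)
  have hP := one_le_distPartPoly (N := N) (l := l) (by linarith : 0 ≤ x)
  have hPz := one_le_distPartPoly (N := N) (l := l) (by nlinarith : 0 ≤ z)
  have hupper := mul_distPartPolyDeriv_le (N := N) (l := l) (by linarith : 0 ≤ x)
  have hlower := mul_distPartPoly_le_distPartPolyDeriv hlN (by nlinarith : 0 ≤ z)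
    (by nlinarith : z ≤ 3 / 4)
  have hscaled : x * (distPartPolyDeriv N l x * distPartPoly N l z +
      distPartPoly N l x * (distPartPolyDeriv N l z * (4 - 8 * x))) ≤ 0 := by
    have h1 := mul_le_mul_of_nonneg_right hupper (by linarith : 0 ≤ distPartPoly N l z)
    have h2 := mul_le_mul_of_nonneg_left hlower
      (mul_nonneg (by nlinarith) (by linarith) : 0 ≤ (8 * x - 4) * x * distPartPoly N l x)
    have h3 : 0 ≤ l * distPartPoly N l x * distPartPoly N l z * (16 * x ^ 2 - 8 * x - 3) := by
      have : 0 ≤ 16 * x ^ 2 - 8 * x - 3 := by nlinarith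
      positivity
    nlinarith
  exact nonpos_of_mul_nonpos_right hscaled (by linarith)

theorem distPartPoly_mul_logistic_le (hlN : l < N) {y : ℝ} (hy : 3 / 4 ≤ y) (hy₁ : y ≤ 1) :
    distPartPoly N l y * distPartPoly N l (4 * y * (1 - y)) ≤ distPartPoly N l (3 / 4) ^ 2 := by
  have hderiv (x : ℝ) : HasDerivAt (fun x ↦ distPartPoly N l x * distPartPoly N l (4 * x * (1 - x)))
      (distPartPolyDeriv N l x * distPartPoly N l (4 * x * (1 - x)) +
        distPartPoly N l x * (distPartPolyDeriv N l (4 * x * (1 - x)) * (4 - 8 * x))) x := by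
    have hlogistic : HasDerivAt (fun x : ℝ ↦ 4 * x * (1 - x)) (4 - 8 * x) x :=
      (((hasDerivAt_id' x).const_mul 4).mul ((hasDerivAt_id' x).const_sub 1)).congr_deriv
        (by ring)
    exact (hasDerivAt_distPartPoly x).mul ((hasDerivAt_distPartPoly _).comp x hlogistic)
  have hanti : AntitoneOn (fun x ↦ distPartPoly N l x * distPartPoly N l (4 * x * (1 - x)))
      (Set.Icc (3 / 4) 1) := by
    refine antitoneOn_of_deriv_nonpos (convex_Icc _ _)
      (HasDerivAt.continuousOn fun x _ ↦ hderiv x)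
      (fun x _ ↦ (hderiv x).differentiableAt.differentiableWithinAt) fun x hx ↦ ?_
    rw [interior_Icc] at hx
    rw [(hderiv x).deriv]
    exact distPartPoly_mul_logistic_deriv_nonpos hlN hx.1.le hx.2.le
  have := hanti ⟨le_rfl, by norm_num⟩ ⟨hy, hy₁⟩ hy
  norm_num at this
  linarith

end distPartPoly

section distPartL

variable {N l : ℕ}

theorem distPartL_eq_distPartPoly (ξ : ℝ) :
    distPartL N l ξ = distPartPoly N l (sin (ξ / 2) ^ 2) := by
  simp only [distPartL, distPartPoly, pow_mul]

theorem one_le_distPartL (ξ : ℝ) : 1 ≤ distPartL N l ξ :=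
  distPartL_eq_distPartPoly ξ ▸ one_le_distPartPoly (sq_nonneg _)

theorem distPartL_two_pi_div_three : distPartL N l (2 * π / 3) = distPartPoly N l (3 / 4) := by
  rw [distPartL_eq_distPartPoly, show 2 * π / 3 / 2 = π / 3 by ring, sin_pi_div_three, div_pow,
    sq_sqrt zero_le_three]
  norm_num

theorem distPartL_le_sum_choose (ξ : ℝ) :
    distPartL N l ξ ≤ ∑ j ∈ range (l + 1), ((N - 1 + j).choose j : ℝ) := by
  rw [distPartL_eq_distPartPoly, ← distPartPoly_one]
  exact distPartPoly_mono (sq_nonneg _) (sin_sq_le_one _)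

theorem distPartL_le_exp (ξ : ℝ) :
    distPartL N l ξ ≤ exp ((∑ j ∈ Icc 1 l, ((N - 1 + j).choose j : ℝ)) / 4 * ξ ^ 2) := by
  have hS : 0 ≤ ∑ j ∈ Icc 1 l, ((N - 1 + j).choose j : ℝ) := by positivity
  have hsin : sin (ξ / 2) ^ 2 ≤ ξ ^ 2 / 4 := by linarith [sin_sq_le_sq (x := ξ / 2)]
  rw [distPartL_eq_distPartPoly]
  calc distPartPoly N l (sin (ξ / 2) ^ 2)
      ≤ 1 + (∑ j ∈ Icc 1 l, ((N - 1 + j).choose j : ℝ)) * sin (ξ / 2) ^ 2 :=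
        distPartPoly_le_one_add_mul (sq_nonneg _) (sin_sq_le_one _)
    _ ≤ (∑ j ∈ Icc 1 l, ((N - 1 + j).choose j : ℝ)) / 4 * ξ ^ 2 + 1 := by nlinarith
    _ ≤ _ := add_one_le_exp _

theorem distPartL_le_or_mul_le (hlN : l < N) (x : ℝ) :
    distPartL N l x ≤ distPartL N l (2 * π / 3) ∨
      distPartL N l (2 * x) * distPartL N l x ≤ distPartL N l (2 * π / 3) ^ 2 := by
  rw [distPartL_two_pi_div_three, distPartL_eq_distPartPoly, distPartL_eq_distPartPoly,
    mul_div_cancel_left₀ x two_ne_zero, sin_sq_eq_four_mul_sin_sq_half x]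
  rcases le_or_gt (sin (x / 2) ^ 2) (3 / 4) with hgood | hbad
  · exact .inl (distPartPoly_mono (sq_nonneg _) hgood)
  · exact .inr (mul_comm (distPartPoly N l _) _ ▸
      distPartPoly_mul_logistic_le hlN hbad.le (sin_sq_le_one _))

theorem prod_range_distPartL_le (hlN : l < N) (ξ : ℝ) (n : ℕ) :
    ∏ j ∈ range (n + 1), distPartL N l (ξ / 2 ^ (j + 1)) ≤
      (∑ j ∈ range (l + 1), ((N - 1 + j).choose j : ℝ)) * distPartL N l (2 * π / 3) ^ n := by
  refine prod_range_succ_le_mul_pow (a := fun j ↦ distPartL N l (ξ / 2 ^ (j + 1)))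
    (fun j ↦ zero_le_one.trans (one_le_distPartL _)) (zero_le_one.trans (one_le_distPartL _))
    (distPartL_le_sum_choose _) (distPartL_le_sum_choose _) (fun j ↦ ?_) n
  have h := distPartL_le_or_mul_le hlN (ξ / 2 ^ (j + 1) / 2)
  rwa [mul_div_cancel₀ _ two_ne_zero, div_div, ← pow_succ] at h

theorem tprod_distPartL_le_prod_mul_exp {ξ : ℝ} {n : ℕ} (hξ : |ξ| ≤ 2 ^ n) :
    ∏' j, distPartL N l (ξ / 2 ^ (j + 1)) ≤ (∏ j ∈ range n, distPartL N l (ξ / 2 ^ (j + 1))) *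
      exp ((∑ j ∈ Icc 1 l, ((N - 1 + j).choose j : ℝ)) / 4 / 3) := by
  set S := ∑ j ∈ Icc 1 l, ((N - 1 + j).choose j : ℝ)
  have hsum (n : ℕ) := (hasSum_sq_div_two_pow ξ n).mul_left (S / 4)
  have hξn : (ξ / 2 ^ n) ^ 2 ≤ 1 := by
    rw [div_pow, div_le_one (by positivity), ← sq_abs]
    exact pow_le_pow_left₀ (abs_nonneg _) hξ 2
  have hS : 0 ≤ S := by positivity
  calc ∏' j, distPartL N l (ξ / 2 ^ (j + 1))
      ≤ (∏ j ∈ range n, distPartL N l (ξ / 2 ^ (j + 1))) * exp (S / 4 * ((ξ / 2 ^ n) ^ 2 / 3)) := by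
        rw [← (hsum n).tsum_eq]
        exact tprod_le_prod_range_mul_exp (fun _ ↦ one_le_distPartL _)
          (fun _ ↦ distPartL_le_exp _) (hsum 0).summable n
    _ ≤ _ := by
        gcongr
        · exact prod_nonneg fun j _ ↦ zero_le_one.trans (one_le_distPartL _)
        · nlinarith

end distPartL

theorem distPart_infinite_product_bound_large_general (N l : ℕ) (hlN : l < N)
    (J : ℕ) (hJ : 2 ≤ J) (ξ : ℝ) (hξ : 1 < |ξ|) :
    (∏' j : ℕ, |distPartL N l (ξ / 2 ^ (j + 1))|) ≤
      Real.exp (((∑ j ∈ Finset.Icc 1 l, ((N - 1 + j).choose j : ℝ)) / 4) / 3) *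
        ((∑ j ∈ Finset.range (l + 1), ((N - 1 + j).choose j : ℝ)) *
          |distPartL N l (2 * π / 3)| ^ (J - 1)) *
        |ξ| ^ (Real.logb 2
          ((∑ j ∈ Finset.range (l + 1), ((N - 1 + j).choose j : ℝ)) ^ ((1 : ℝ) / (J - 1)) *
            |distPartL N l (2 * π / 3)|)) := by
  set q₁ := ∑ j ∈ Finset.range (l + 1), ((N - 1 + j).choose j : ℝ)
  set S := ∑ j ∈ Finset.Icc 1 l, ((N - 1 + j).choose j : ℝ)
  have habs (x : ℝ) : |distPartL N l x| = distPartL N l x :=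
    abs_of_pos (one_pos.trans_le (one_le_distPartL x))
  simp only [habs]
  set q₂ := distPartL N l (2 * π / 3)
  have hq₂ : 1 ≤ q₂ := one_le_distPartL _
  have hq₁ : 1 ≤ q₁ := (one_le_distPartL 0).trans (distPartL_le_sum_choose 0)
  have hX : q₂ ≤ q₁ ^ ((1 : ℝ) / (J - 1)) * q₂ := by
    refine le_mul_of_one_le_left (by linarith) (one_le_rpow hq₁ ?_)
    have : (2 : ℝ) ≤ J := by exact_mod_cast hJ
    exact div_nonneg zero_le_one (by linarith)
  set α := logb 2 (q₁ ^ ((1 : ℝ) / (J - 1)) * q₂)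
  obtain ⟨m, hm, hm'⟩ := exists_nat_pow_near hξ.le one_lt_two
  have hpow : q₂ ^ m ≤ |ξ| ^ α :=
    (pow_le_pow_left₀ (by linarith) hX m).trans (pow_le_rpow_logb one_lt_two (hq₂.trans hX) hm)
  calc ∏' j, distPartL N l (ξ / 2 ^ (j + 1))
      ≤ (∏ j ∈ range (m + 1), distPartL N l (ξ / 2 ^ (j + 1))) * exp (S / 4 / 3) :=
        tprod_distPartL_le_prod_mul_exp hm'.le
    _ ≤ q₁ * (q₂ ^ (J - 1) * |ξ| ^ α) * exp (S / 4 / 3) := by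
        gcongr
        refine (prod_range_distPartL_le hlN ξ m).trans ?_
        gcongr
        exact hpow.trans (le_mul_of_one_le_left (by positivity) (one_le_pow₀ hq₂))
    _ = exp (S / 4 / 3) * (q₁ * q₂ ^ (J - 1)) * |ξ| ^ α := by ring

theorem distPart_infinite_product_bound_large (N l : ℕ) (hl : 0 < l) (hlN : l < N)
    (J : ℕ) (hJ : 2 ≤ J) (ξ : ℝ) (hξ : 1 < |ξ|) :
    (∏' j : ℕ, |distPartL N l (ξ / 2 ^ (j + 1))|) ≤
      Real.exp (((∑ j ∈ Finset.Icc 1 l, ((N - 1 + j).choose j : ℝ)) / 4) / 3) *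
        ((∑ j ∈ Finset.range (l + 1), ((N - 1 + j).choose j : ℝ)) *
          |distPartL N l (2 * π / 3)| ^ (J - 1)) *
        |ξ| ^ (Real.logb 2
          ((∑ j ∈ Finset.range (l + 1), ((N - 1 + j).choose j : ℝ)) ^ ((1 : ℝ) / (J - 1)) *
            |distPartL N l (2 * π / 3)|)) :=
  distPart_infinite_product_bound_large_general N l hlN J hJ ξ hξ
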